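/- arXiv:2311.13595 — 5 statements merged into one kernel-verified Lean document; each statement's English description precedes it below -/
import Mathlib

section
/- Let x_1, ..., x_d > 0 be real numbers with product equal to 1. Then the sum over i of (x_i - 1)^2 is at most 4 times (S + S^2), where S = sum over i of (x_i - 1). -/
/-- Polynomial core inequality. -/
lemma poly_key (t : ℝ) (ht : 0 ≤ t) :
    (t^2 + t + 1)^2 ≤ 4*(t+2) + 4*(t-1)^2*(t+2)^2 := by
  nlinarith [sq_nonneg (t-1), sq_nonneg (t^2-1), sq_nonneg (t^2 - 2*t + 1),
    sq_nonneg (t^2 + t - 2), sq_nonneg t, mul_nonneg ht (sq_nonneg (t-1)),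
    mul_nonneg (mul_nonneg ht ht) (sq_nonneg (t-1)), sq_nonneg (t*(t-1))]

/-- Pointwise: (x-1)^2 ≤ 4 f + 4 f^2 where f = x - 1 - log x. -/
lemma pointwise_key (x : ℝ) (hx : 0 < x) :
    (x - 1)^2 ≤ 4*(x - 1 - Real.log x) + 4*(x - 1 - Real.log x)^2 := by
  set t : ℝ := x ^ ((1:ℝ)/3) with htdef
  have ht : 0 < t := Real.rpow_pos_of_pos hx _
  have htx : t ^ 3 = x := by
    rw [htdef, ← Real.rpow_natCast (x ^ ((1:ℝ)/3)) 3, ← Real.rpow_mul hx.le]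
    norm_num
  have hlogt : Real.log t ≤ t - 1 := Real.log_le_sub_one_of_pos ht
  have hlogx : Real.log x = 3 * Real.log t := by
    rw [← htx, ← Real.rpow_natCast t 3, Real.log_rpow ht]
    norm_num
  set f : ℝ := x - 1 - Real.log x with hfdef
  set g : ℝ := (t-1)^2 * (t+2) with hgdef
  have hfg : g ≤ f := by
    rw [hfdef, hgdef, hlogx, ← htx]
    nlinarith [hlogt]
  have hg0 : 0 ≤ g := by rw [hgdef]; positivity
  have hf0 : 0 ≤ f := le_trans hg0 hfg
  have hpoly := poly_key t ht.le
  have hx1 : (x - 1)^2 = (t-1)^2 * (t^2 + t + 1)^2 := by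
    rw [← htx]; ring
  have h1 : (x - 1)^2 ≤ 4*g + 4*g^2 := by
    rw [hx1]
    calc (t-1)^2 * (t^2+t+1)^2
        ≤ (t-1)^2 * (4*(t+2) + 4*(t-1)^2*(t+2)^2) :=
          mul_le_mul_of_nonneg_left hpoly (sq_nonneg _)
      _ = 4*g + 4*g^2 := by rw [hgdef]; ring
  have hkey : 0 ≤ (f - g) * (1 + f + g) :=
    mul_nonneg (sub_nonneg.mpr hfg) (by linarith)
  nlinarith [h1, hkey]

theorem stmt_0 (d : ℕ) (hd : 0 < d) (x : Fin d → ℝ)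
    (hx : ∀ i, 0 < x i) (hprod : ∏ i, x i = 1) :
    ∑ i, (x i - 1) ^ 2 ≤ 4 * ((∑ i, (x i - 1)) + (∑ i, (x i - 1)) ^ 2) := by
  set f : Fin d → ℝ := fun i => x i - 1 - Real.log (x i) with hfdef
  have hf0 : ∀ i, 0 ≤ f i := fun i =>
    sub_nonneg.mpr (Real.log_le_sub_one_of_pos (hx i))
  have hlogsum : ∑ i, Real.log (x i) = 0 := by
    rw [← Real.log_prod (fun i _ => (hx i).ne'), hprod, Real.log_one]
  have hS : ∑ i, (x i - 1) = ∑ i, f i := by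
    have h : ∑ i, f i = ∑ i, (x i - 1) - ∑ i, Real.log (x i) :=
      (Finset.sum_sub_distrib _ _)
    rw [h, hlogsum, sub_zero]
  set S : ℝ := ∑ i, f i with hSdef
  have hS0 : 0 ≤ S := Finset.sum_nonneg (fun i _ => hf0 i)
  have hfi_le : ∀ i, f i ≤ S := fun i =>
    Finset.single_le_sum (fun j _ => hf0 j) (Finset.mem_univ i)
  have hsum_sq : ∑ i, (f i)^2 ≤ S^2 := by
    calc ∑ i, (f i)^2 ≤ ∑ i, f i * S :=
          Finset.sum_le_sum (fun i _ => by
            have := hfi_le i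
            nlinarith [hf0 i])
      _ = S * S := by rw [← Finset.sum_mul]
      _ = S^2 := by ring
  have hpt : ∑ i, (x i - 1)^2 ≤ ∑ i, (4 * f i + 4 * (f i)^2) :=
    Finset.sum_le_sum (fun i _ => pointwise_key (x i) (hx i))
  calc ∑ i, (x i - 1)^2 ≤ ∑ i, (4 * f i + 4 * (f i)^2) := hpt
    _ = 4 * S + 4 * ∑ i, (f i)^2 := by
        rw [Finset.sum_add_distrib, ← Finset.mul_sum, ← Finset.mul_sum]
    _ ≤ 4 * S + 4 * S^2 := by nlinarith [hsum_sq]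
    _ = 4 * (S + S^2) := by ring
    _ = 4 * ((∑ i, (x i - 1)) + (∑ i, (x i - 1))^2) := by rw [hS]
end

section
/- Let x_1, ..., x_d > 0 with product 1, and suppose S := \sum_i (x_i - 1) satisfies the implicit constraints. Then for each i, x_i ≤ 2(S + 1). -/
theorem stmt_3 (d : ℕ) (hd : 0 < d) (x : Fin d → ℝ)
    (hx : ∀ i, 0 < x i) (hprod : ∏ i, x i = 1) (i : Fin d) :
    x i ≤ 2 * ((∑ j, (x j - 1)) + 1) := by
  have hlog : ∀ j, Real.log (x j) ≤ x j - 1 := fun j => Real.log_le_sub_one_of_pos (hx j)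
  have hsumlog : ∑ j, Real.log (x j) = 0 := by
    rw [← Real.log_prod (s := Finset.univ) (f := x) (fun j _ => (hx j).ne'), hprod, Real.log_one]
  -- key: x i - log (x i) ≤ S + 1
  have h1 : ∑ j, (x j - 1) + 1 = ∑ j, (x j - Real.log (x j)) - (d - 1 : ℝ) := by
    rw [Finset.sum_sub_distrib, Finset.sum_sub_distrib, hsumlog]
    simp [Finset.card_univ]
    ring
  have h2 : x i - Real.log (x i) + ((d : ℝ) - 1) ≤ ∑ j, (x j - Real.log (x j)) := by
    rw [← Finset.sum_erase_add _ _ (Finset.mem_univ i)]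
    have hcard : ((Finset.univ.erase i).card : ℝ) = (d : ℝ) - 1 := by
      rw [Finset.card_erase_of_mem (Finset.mem_univ i), Finset.card_fin,
        Nat.cast_sub hd, Nat.cast_one]
    have hle := Finset.card_nsmul_le_sum (Finset.univ.erase i)
      (fun j => x j - Real.log (x j)) 1 (fun j _ => by have := hlog j; show 1 ≤ x j - Real.log (x j); linarith)
    rw [nsmul_eq_mul, mul_one, hcard] at hle
    linarith
  have key : x i - Real.log (x i) ≤ ∑ j, (x j - 1) + 1 := by
    rw [h1]; linarith
  -- x i ≤ 2 * (x i - log (x i))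
  have h3 : Real.log (x i / 2) ≤ x i / 2 - 1 := Real.log_le_sub_one_of_pos (div_pos (hx i) two_pos)
  have h4 : Real.log (x i / 2) = Real.log (x i) - Real.log 2 :=
    Real.log_div (hx i).ne' two_ne_zero
  have h5 : Real.log 2 < 1 := by
    have := Real.log_two_lt_d9
    linarith
  linarith
end

section
/- If Σ is a positive definite d×d real matrix, then min(1, ||Σ^{-1} - I||_F) ≤ 2 · min(1, ||Σ - I||_F) and min(1, ||Σ - I||_F) ≤ 2 · min(1, ||Σ^{-1} - I||_F). -/
/-- Frobenius norm of a square real matrix. -/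
noncomputable def frobNorm {d : ℕ} (A : Matrix (Fin d) (Fin d) ℝ) : ℝ :=
  Real.sqrt (∑ i, ∑ j, (A i j) ^ 2)

attribute [local instance] Matrix.frobeniusSeminormedAddCommGroup Matrix.frobeniusNormedRing

lemma frobNorm_eq_norm {d : ℕ} (A : Matrix (Fin d) (Fin d) ℝ) : frobNorm A = ‖A‖ := by
  rw [Matrix.frobenius_norm_def, frobNorm, Real.sqrt_eq_rpow]
  congr 1
  refine Finset.sum_congr rfl fun i _ => Finset.sum_congr rfl fun j _ => ?_
  rw [Real.rpow_two, Real.norm_eq_abs, sq_abs]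

lemma key_scalar (s t : ℝ) (hs : 0 ≤ s) (h : s ≤ t + s * t) :
    min 1 s ≤ 2 * min 1 t := by
  have ht : 0 ≤ t := by nlinarith [min_le_right (1:ℝ) s]
  rcases le_or_gt (1/2 : ℝ) t with h1 | h1
  · have : (1:ℝ) ≤ 2 * min 1 t := by
      rcases le_total (1:ℝ) t with h2 | h2
      · rw [min_eq_left h2]; linarith
      · rw [min_eq_right h2]; linarith
    exact le_trans (min_le_left _ _) this
  · rw [min_eq_right (by linarith : t ≤ 1)]
    have hst : s ≤ 2 * t := by nlinarith
    exact le_trans (min_le_right _ _) hst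

theorem stmt_4 (d : ℕ) (Sig : Matrix (Fin d) (Fin d) ℝ) (hSig : Sig.PosDef) :
    min 1 (frobNorm (Sig⁻¹ - 1)) ≤ 2 * min 1 (frobNorm (Sig - 1)) ∧
    min 1 (frobNorm (Sig - 1)) ≤ 2 * min 1 (frobNorm (Sig⁻¹ - 1)) := by
  have hdet : IsUnit Sig.det := isUnit_iff_ne_zero.mpr hSig.det_pos.ne'
  have hinv : Sig⁻¹ * Sig = 1 := Matrix.nonsing_inv_mul Sig hdet
  have hinv' : Sig * Sig⁻¹ = 1 := Matrix.mul_nonsing_inv Sig hdet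
  set S := Sig⁻¹ - 1 with hSdef
  set T := Sig - 1 with hTdef
  have hS : S = -(T + S * T) := by
    rw [hSdef, hTdef, sub_mul, mul_sub, hinv]
    noncomm_ring
  have hT : T = -(S + T * S) := by
    rw [hSdef, hTdef, sub_mul, mul_sub, hinv']
    noncomm_ring
  have hns : frobNorm S = ‖S‖ := frobNorm_eq_norm S
  have hnt : frobNorm T = ‖T‖ := frobNorm_eq_norm T
  have h1 : ‖S‖ ≤ ‖T‖ + ‖S‖ * ‖T‖ := by
    calc ‖S‖ = ‖T + S * T‖ := by conv_lhs => rw [hS, norm_neg]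
    _ ≤ ‖T‖ + ‖S * T‖ := norm_add_le _ _
    _ ≤ ‖T‖ + ‖S‖ * ‖T‖ := by gcongr; exact norm_mul_le _ _
  have h2 : ‖T‖ ≤ ‖S‖ + ‖T‖ * ‖S‖ := by
    calc ‖T‖ = ‖S + T * S‖ := by conv_lhs => rw [hT, norm_neg]
    _ ≤ ‖S‖ + ‖T * S‖ := norm_add_le _ _
    _ ≤ ‖S‖ + ‖T‖ * ‖S‖ := by gcongr; exact norm_mul_le _ _
  rw [hns, hnt]
  exact ⟨key_scalar _ _ (norm_nonneg _) h1, key_scalar _ _ (norm_nonneg _) h2⟩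
end

section
/- For any positive definite d×d matrix Σ and any permutation π of {1,...,d}, letting Σ^π denote the matrix with (Σ^π)_{ij} = Σ_{π(i)π(j)}, we have ||Σ^{-1/2} Σ^π Σ^{-1/2} - I||_F^2 ≤ 4(⟨Σ^π - Σ, Σ^{-1}⟩ + ⟨Σ^π - Σ, Σ^{-1}⟩^2), where ⟨A,B⟩ = Tr(AB^T). -/
open Matrix

lemma key_scalar_s5 {x : ℝ} (hx : 0 < x) :
    (x - 1)^2 ≤ 4 * (x - 1 - Real.log x) + 4 * (x - 1 - Real.log x)^2 := by
  have hg0 : 0 ≤ x - 1 - Real.log x := by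
    have := Real.log_le_sub_one_of_pos hx; linarith
  rcases le_or_gt x 1 with h | h
  · set y := Real.sqrt x with hy
    have hy0 : 0 ≤ y := Real.sqrt_nonneg x
    have hy1 : y ≤ 1 := Real.sqrt_le_one.mpr h
    have hyx : y^2 = x := Real.sq_sqrt hx.le
    have hylog : Real.log x = 2 * Real.log y := by
      rw [← hyx, Real.log_pow]; push_cast; ring
    have hly : Real.log y ≤ y - 1 := by
      have hy0' : 0 < y := Real.sqrt_pos.mpr hx
      exact Real.log_le_sub_one_of_pos hy0'
    have hglb : (y - 1)^2 ≤ x - 1 - Real.log x := by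
      rw [hylog, ← hyx]; nlinarith
    nlinarith [sq_nonneg (y - 1), sq_nonneg (y + 1)]
  · set y := Real.sqrt (Real.sqrt x) with hy
    have hx0 : (0:ℝ) < Real.sqrt x := Real.sqrt_pos.mpr hx
    have hy0 : 0 < y := Real.sqrt_pos.mpr hx0
    have hy2 : y^2 = Real.sqrt x := Real.sq_sqrt hx0.le
    have hy4 : y^4 = x := by
      have : (y^2)^2 = x := by rw [hy2]; exact Real.sq_sqrt hx.le
      nlinarith
    have hy1 : 1 ≤ y := by
      nlinarith [Real.one_le_sqrt.mpr (Real.one_le_sqrt.mpr h.le)]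
    have hylog : Real.log x = 4 * Real.log y := by
      rw [← hy4, Real.log_pow]; push_cast; ring
    have hly : Real.log y ≤ y - 1 := Real.log_le_sub_one_of_pos hy0
    set g := x - 1 - Real.log x with hgdef
    have hglb : (y-1)^2 * (y^2 + 2*y + 3) ≤ g := by
      rw [hgdef, hylog, ← hy4]; nlinarith
    have hpoly : (y^4 - 1)^2 ≤ 4 * ((y-1)^2 * (y^2+2*y+3)) + 4 * ((y-1)^2 * (y^2+2*y+3))^2 := by
      nlinarith [sq_nonneg (y-1), sq_nonneg (y+1), sq_nonneg (y*y-1), sq_nonneg ((y-1)*(y+1)), hy1, sq_nonneg ((y-1)^2)]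
    have hq : 0 ≤ (y-1)^2 * (y^2+2*y+3) := by positivity
    calc (x-1)^2 = (y^4-1)^2 := by rw [hy4]
      _ ≤ 4 * ((y-1)^2 * (y^2+2*y+3)) + 4 * ((y-1)^2 * (y^2+2*y+3))^2 := hpoly
      _ ≤ 4 * g + 4 * g^2 := by nlinarith

lemma perm_dot (d : ℕ) (Sig : Matrix (Fin d) (Fin d) ℝ) (π : Equiv.Perm (Fin d))
    (x : Fin d → ℝ) :
    star x ⬝ᵥ (Sig.submatrix π π) *ᵥ x
      = star (x ∘ π.symm) ⬝ᵥ Sig *ᵥ (x ∘ π.symm) := by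
  rw [Matrix.submatrix_mulVec_equiv]
  rw [dotProduct]
  rw [← Equiv.sum_comp π.symm (fun j => star x j * ((Sig *ᵥ (x ∘ π.symm)) ∘ π) j)]
  apply Finset.sum_congr rfl; intro i _
  simp [dotProduct]

lemma perm_posdef (d : ℕ) (Sig : Matrix (Fin d) (Fin d) ℝ) (hSig : Sig.PosDef)
    (π : Equiv.Perm (Fin d)) : (Sig.submatrix π π).PosDef := by
  refine Matrix.PosDef.of_dotProduct_mulVec_pos ?_ ?_
  · have := hSig.isHermitian
    simpa [Matrix.IsHermitian, Matrix.conjTranspose_submatrix] using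
      congrArg (fun M => M.submatrix π π) this.eq
  · intro x hx
    have hy : (x ∘ π.symm) ≠ 0 := by
      intro h; apply hx; funext i
      have := congrFun h (π i); simpa using this
    rw [perm_dot]
    exact hSig.dotProduct_mulVec_pos hy

/-- The square root of a positive semidefinite matrix, as defined in the older Mathlib. -/
noncomputable def Matrix.PosSemidef.sqrt {n : Type*} [Fintype n] [DecidableEq n]
    {A : Matrix n n ℝ} (hA : A.PosSemidef) : Matrix n n ℝ :=
  hA.1.eigenvectorUnitary.1 * Matrix.diagonal ((↑) ∘ (Real.sqrt ·) ∘ hA.1.eigenvalues) *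
    (star hA.1.eigenvectorUnitary : Matrix n n ℝ)

lemma Matrix.PosSemidef.posSemidef_sqrt {n : Type*} [Fintype n] [DecidableEq n]
    {A : Matrix n n ℝ} (hA : A.PosSemidef) : hA.sqrt.PosSemidef := by
  unfold Matrix.PosSemidef.sqrt
  have h0 : (0 : n → ℝ) ≤ ((↑) ∘ (Real.sqrt ·) ∘ hA.1.eigenvalues) :=
    fun i => Real.sqrt_nonneg _
  have := (Matrix.PosSemidef.diagonal h0).mul_mul_conjTranspose_same
    (hA.1.eigenvectorUnitary : Matrix n n ℝ)
  rwa [← Matrix.star_eq_conjTranspose] at this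

lemma Matrix.PosSemidef.sqrt_mul_self {n : Type*} [Fintype n] [DecidableEq n]
    {A : Matrix n n ℝ} (hA : A.PosSemidef) : hA.sqrt * hA.sqrt = A := by
  unfold Matrix.PosSemidef.sqrt
  set U : Matrix n n ℝ := (hA.1.eigenvectorUnitary : Matrix n n ℝ) with hU
  have hUU' : star U * U = 1 := (Matrix.mem_unitaryGroup_iff').mp hA.1.eigenvectorUnitary.2
  have hD : Matrix.diagonal ((fun x : ℝ => x) ∘ (Real.sqrt ·) ∘ hA.1.eigenvalues) *
      Matrix.diagonal ((fun x : ℝ => x) ∘ (Real.sqrt ·) ∘ hA.1.eigenvalues) =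
      Matrix.diagonal (RCLike.ofReal ∘ hA.1.eigenvalues) := by
    rw [Matrix.diagonal_mul_diagonal]; congr 1; funext i
    simp [Real.mul_self_sqrt (hA.eigenvalues_nonneg i)]
  conv_rhs => rw [hA.1.spectral_theorem, Unitary.conjStarAlgAut_apply, ← hD]
  simp only [mul_assoc]
  rw [← mul_assoc (star U) U, hUU', one_mul]

theorem stmt_5 (d : ℕ) (Sig : Matrix (Fin d) (Fin d) ℝ) (hSig : Sig.PosDef)
    (π : Equiv.Perm (Fin d)) :
    let Sp : Matrix (Fin d) (Fin d) ℝ := Sig.submatrix π π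
    let S : Matrix (Fin d) (Fin d) ℝ := (hSig.inv.posSemidef).sqrt
    let t : ℝ := Matrix.trace ((Sp - Sig) * (Sig⁻¹).transpose)
    frobNorm (S * Sp * S - 1) ^ 2 ≤ 4 * (t + t ^ 2) := by
  intro Sp S t
  have hd : Sig.det ≠ 0 := hSig.det_pos.ne'
  have hSp : Sp.PosDef := perm_posdef d Sig hSig π
  have hSpsd : S.PosSemidef := Matrix.PosSemidef.posSemidef_sqrt _
  have hSS : S * S = Sig⁻¹ := Matrix.PosSemidef.sqrt_mul_self _
  set M := S * Sp * S with hMdef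
  have hMpsd : M.PosSemidef := by
    have h1 := hSp.posSemidef.mul_mul_conjTranspose_same S
    rwa [hSpsd.isHermitian.eq] at h1
  have hH : M.IsHermitian := hMpsd.1
  set ev := hH.eigenvalues with hev
  -- unitary facts
  set U : Matrix (Fin d) (Fin d) ℝ := (hH.eigenvectorUnitary : Matrix (Fin d) (Fin d) ℝ) with hU
  have hUU : U * star U = 1 := (Matrix.mem_unitaryGroup_iff).mp hH.eigenvectorUnitary.2
  have hUU' : star U * U = 1 := (Matrix.mem_unitaryGroup_iff').mp hH.eigenvectorUnitary.2
  have hspec : M = U * Matrix.diagonal ev * star U := by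
    have := hH.spectral_theorem
    rw [Unitary.conjStarAlgAut_apply] at this
    simp only [RCLike.ofReal_real_eq_id, Function.id_comp] at this
    exact this
  -- determinant is 1
  have hdetM : M.det = 1 := by
    have h1 : Sp.det = Sig.det := Matrix.det_submatrix_equiv_self π Sig
    have h2 : S.det * S.det = Sig⁻¹.det := by rw [← Matrix.det_mul, hSS]
    have h3 : Sig⁻¹.det = Sig.det⁻¹ := by
      rw [Matrix.det_nonsing_inv, Ring.inverse_eq_inv]
    rw [hMdef, Matrix.det_mul, Matrix.det_mul, h1]
    calc S.det * Sig.det * S.det = (S.det * S.det) * Sig.det := by ring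
      _ = Sig.det⁻¹ * Sig.det := by rw [h2, h3]
      _ = 1 := inv_mul_cancel₀ hd
  have hprod : ∏ i, ev i = 1 := by
    have := hH.det_eq_prod_eigenvalues
    rw [hdetM] at this
    simpa using this.symm
  have hxpos : ∀ i, 0 < ev i := by
    intro i
    rcases (hMpsd.eigenvalues_nonneg i).lt_or_eq with h | h
    · exact h
    · exfalso
      have : (∏ j, ev j) = 0 := Finset.prod_eq_zero (Finset.mem_univ i) h.symm
      rw [hprod] at this; norm_num at this
  -- trace M = sum of eigenvalues
  have htr : M.trace = ∑ i, ev i := by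
    conv_lhs => rw [hspec]
    rw [Matrix.trace_mul_cycle, hUU', one_mul, Matrix.trace_diagonal]
  -- t = trace M - d
  have hSigT : (Sig⁻¹)ᵀ = Sig⁻¹ := by
    rw [Matrix.transpose_nonsing_inv]
    congr 1
    have := hSig.isHermitian.eq
    rwa [Matrix.conjTranspose_eq_transpose_of_trivial] at this
  have ht : t = M.trace - d := by
    show Matrix.trace ((Sp - Sig) * (Sig⁻¹)ᵀ) = M.trace - d
    rw [hSigT, Matrix.sub_mul, Matrix.trace_sub, Matrix.mul_nonsing_inv Sig (isUnit_iff_ne_zero.mpr hd),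
      Matrix.trace_one, ← hSS, ← Matrix.mul_assoc, Matrix.trace_mul_cycle]
    simp [hMdef]
  -- Frobenius norm squared
  have hfrob : frobNorm (M - 1) ^ 2 = ∑ i, (ev i - 1)^2 := by
    have hnn : (0:ℝ) ≤ ∑ i, ∑ j, ((M - 1) i j)^2 := by positivity
    rw [frobNorm, Real.sq_sqrt hnn]
    have hsym : (M - 1)ᵀ = M - 1 := by
      have := (hH.sub (Matrix.isHermitian_one)).eq
      rwa [Matrix.conjTranspose_eq_transpose_of_trivial] at this
    have h1 : ∑ i, ∑ j, ((M - 1) i j)^2 = ((M - 1) * (M - 1)).trace := by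
      rw [Matrix.trace]
      apply Finset.sum_congr rfl; intro i _
      rw [Matrix.diag_apply, Matrix.mul_apply]
      apply Finset.sum_congr rfl; intro j _
      have h3 : (M - 1) j i = (M - 1) i j := by
        have := congrFun (congrFun hsym j) i
        simpa using this.symm
      rw [h3]; ring
    rw [h1]
    have hM1 : M - 1 = U * (Matrix.diagonal ev - 1) * star U := by
      rw [Matrix.mul_sub, Matrix.sub_mul, Matrix.mul_one, hUU, ← hspec]
    have h2 : (M - 1) * (M - 1) = U * ((Matrix.diagonal ev - 1) * (Matrix.diagonal ev - 1)) * star U := by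
      rw [hM1]
      calc U * (Matrix.diagonal ev - 1) * star U * (U * (Matrix.diagonal ev - 1) * star U)
          = U * (Matrix.diagonal ev - 1) * (star U * U) * (Matrix.diagonal ev - 1) * star U := by
            noncomm_ring
        _ = U * ((Matrix.diagonal ev - 1) * (Matrix.diagonal ev - 1)) * star U := by
            rw [hUU']; noncomm_ring
    rw [h2, Matrix.trace_mul_cycle, hUU', one_mul]
    have hdiag : Matrix.diagonal ev - 1 = Matrix.diagonal (fun i => ev i - 1) := by
      rw [← Matrix.diagonal_one, Matrix.diagonal_sub]
    rw [hdiag, Matrix.diagonal_mul_diagonal, Matrix.trace_diagonal]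
    apply Finset.sum_congr rfl; intro i _; ring
  -- sum of logs = 0
  have hlog : ∑ i, Real.log (ev i) = 0 := by
    rw [← Real.log_prod (fun i _ => (hxpos i).ne'), hprod, Real.log_one]
  -- t = sum (ev - 1)
  have ht' : t = ∑ i, (ev i - 1) := by
    rw [ht, htr, Finset.sum_sub_distrib]
    simp
  -- final assembly
  rw [hfrob, ht']
  set g : Fin d → ℝ := fun i => ev i - 1 - Real.log (ev i) with hg
  have hgnn : ∀ i, 0 ≤ g i := fun i => by
    have := Real.log_le_sub_one_of_pos (hxpos i); simp [hg]; linarith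
  have hgs : ∑ i, g i = ∑ i, (ev i - 1) := by
    rw [hg]
    rw [show (fun i => ev i - 1 - Real.log (ev i)) = fun i => (ev i - 1) - Real.log (ev i) from rfl,
      Finset.sum_sub_distrib, hlog, sub_zero]
  have step1 : ∑ i, (ev i - 1)^2 ≤ ∑ i, (4 * g i + 4 * (g i)^2) :=
    Finset.sum_le_sum (fun i _ => key_scalar_s5 (hxpos i))
  have step2 : ∑ i, (4 * g i + 4 * (g i)^2) = 4 * (∑ i, g i) + 4 * ∑ i, (g i)^2 := by
    rw [Finset.sum_add_distrib, Finset.mul_sum, Finset.mul_sum]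
  have step3 : ∑ i, (g i)^2 ≤ (∑ i, g i)^2 :=
    Finset.sum_sq_le_sq_sum_of_nonneg (fun i _ => hgnn i)
  calc ∑ i, (ev i - 1)^2 ≤ 4 * (∑ i, g i) + 4 * ∑ i, (g i)^2 := by rw [← step2]; exact step1
    _ ≤ 4 * (∑ i, g i) + 4 * (∑ i, g i)^2 := by nlinarith
    _ = 4 * (∑ i, (ev i - 1) + (∑ i, (ev i - 1))^2) := by rw [hgs]; ring
end

section
/- Let Θ be a parameter space, π a prior on Θ, X ~ P_θ given θ, and L : Θ × A → [0,∞) a loss function. For Δ > 0 define p_Δ = sup_a π{θ : L(θ, a) ≤ Δ}. Then for any estimator T(X), the Bayes risk satisfies E_{θ~π} E_{X~P_θ}[L(θ, T(X))] ≥ Δ (1 - (I(θ; X) + log 2) / log(1/p_Δ)), where I(θ; X) is the mutual information. -/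
open MeasureTheory ProbabilityTheory
open scoped ENNReal Classical

/-- Kullback–Leibler divergence, valued in `ℝ≥0∞`. -/
noncomputable def klDiv {α : Type*} [MeasurableSpace α] (P Q : Measure α) : ℝ≥0∞ :=
  if P ≪ Q ∧ Integrable (llr P Q) P then ENNReal.ofReal (∫ x, llr P Q x ∂P) else ⊤

/-- Mutual information `I(θ; X)` of a joint distribution `prior ⊗ₘ P`:
the KL divergence between the joint law and the product of its marginals. -/
noncomputable def mutualInfo {Θ 𝒳 : Type*} [MeasurableSpace Θ] [MeasurableSpace 𝒳]
    (prior : Measure Θ) (P : Kernel Θ 𝒳) : ℝ≥0∞ :=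
  klDiv (prior.compProd P) (prior.prod ((prior.compProd P).snd))

open Real in
lemma jensen_llr {α : Type*} [MeasurableSpace α] (μ ν : Measure α)
    [IsProbabilityMeasure μ] [IsProbabilityMeasure ν]
    (hμν : μ ≪ ν) (hint : Integrable (llr μ ν) μ) {S : Set α} (hS : MeasurableSet S) :
    (μ S).toReal * Real.log ((μ S).toReal / (ν S).toReal) ≤ ∫ x in S, llr μ ν x ∂μ := by
  by_cases hμS : μ S = 0
  · rw [hμS]
    simp [Measure.restrict_eq_zero.mpr hμS]
  -- positive case
  have hνS : ν S ≠ 0 := fun h => hμS (hμν h)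
  have hμSt : 0 < (μ S).toReal := ENNReal.toReal_pos hμS (measure_ne_top _ _)
  have hνSt : 0 < (ν S).toReal := ENNReal.toReal_pos hνS (measure_ne_top _ _)
  set D := μ.rnDeriv ν with hD
  set h : α → ℝ := fun x => ((D x)⁻¹).toReal with hh
  have hDm : Measurable D := Measure.measurable_rnDeriv μ ν
  have hhm : Measurable h := hDm.inv.ennreal_toReal
  have hkey : ∫⁻ x in S, ENNReal.ofReal (h x) ∂μ ≤ ν S := by
    have h1 : ∀ x, ENNReal.ofReal (h x) ≤ (D x)⁻¹ := fun x => ENNReal.ofReal_toReal_le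
    calc ∫⁻ x in S, ENNReal.ofReal (h x) ∂μ ≤ ∫⁻ x in S, (D x)⁻¹ ∂μ :=
          lintegral_mono h1
      _ = ∫⁻ x in S, D x * (D x)⁻¹ ∂ν := (MeasureTheory.setLIntegral_rnDeriv_mul hμν hDm.inv.aemeasurable hS).symm
      _ ≤ ∫⁻ _ in S, 1 ∂ν := lintegral_mono fun x => by rw [mul_comm]; exact ENNReal.inv_mul_le_one _
      _ = ν S := by simp
  have hpos : ∀ᵐ x ∂μ, 0 < h x := by
    filter_upwards [Measure.rnDeriv_pos hμν, hμν.ae_le (Measure.rnDeriv_lt_top μ ν)]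
      with x h0 htop
    exact ENNReal.toReal_pos (by simp [hD, htop.ne]) (by simp [hD, h0.ne'])
  have hlogh : ∀ x, Real.log (h x) = - llr μ ν x := by
    intro x
    simp [hh, hD, llr, ENNReal.toReal_inv, Real.log_inv]
  have hposS : ∀ᵐ x ∂(μ.restrict S), 0 < h x := ae_restrict_of_ae hpos
  -- integrability of h on restrict
  have hint_h : Integrable h (μ.restrict S) := by
    refine ⟨hhm.aestronglyMeasurable, ?_⟩
    rw [hasFiniteIntegral_iff_norm]
    have : ∀ x, ENNReal.ofReal ‖h x‖ = ENNReal.ofReal (h x) := by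
      intro x; rw [Real.norm_eq_abs, abs_of_nonneg ENNReal.toReal_nonneg]
    simp_rw [this]
    exact lt_of_le_of_lt hkey (measure_lt_top _ _)
  have hint_log : Integrable (fun x => Real.log (h x)) (μ.restrict S) := by
    simp_rw [hlogh]
    exact (hint.restrict.neg)
  haveI : NeZero (μ.restrict S) := by
    refine ⟨fun h0 => hμS ?_⟩
    rw [← Measure.restrict_apply_univ, h0]; simp
  -- Jensen with exp
  have hjen := (convexOn_exp).map_average_le continuous_exp.continuousOn isClosed_univ
    (Filter.Eventually.of_forall fun x => Set.mem_univ _) hint_log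
    (by
      refine Integrable.congr hint_h ?_
      filter_upwards [hposS] with x hx
      exact (Real.exp_log hx).symm)
  have havg : (⨍ x in S, Real.exp (Real.log (h x)) ∂μ) = ⨍ x in S, h x ∂μ := by
    refine average_congr ?_
    filter_upwards [hposS] with x hx using Real.exp_log hx
  rw [havg] at hjen
  -- bound the average of h
  have hIh : ∫ x in S, h x ∂μ ≤ (ν S).toReal := by
    rw [integral_eq_lintegral_of_nonneg_ae (ae_restrict_of_ae (hpos.mono fun x hx => hx.le))
      hhm.aestronglyMeasurable]
    exact ENNReal.toReal_mono (measure_ne_top _ _) hkey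
  have havg_le : (⨍ x in S, h x ∂μ) ≤ (μ S).toReal⁻¹ * (ν S).toReal := by
    rw [setAverage_eq, smul_eq_mul]
    exact mul_le_mul_of_nonneg_left hIh (by positivity)
  have hexp_le : Real.exp (⨍ x in S, Real.log (h x) ∂μ) ≤ (μ S).toReal⁻¹ * (ν S).toReal :=
    hjen.trans havg_le
  have hlog_le : (⨍ x in S, Real.log (h x) ∂μ) ≤ Real.log ((μ S).toReal⁻¹ * (ν S).toReal) :=
    (Real.le_log_iff_exp_le (by positivity)).mpr hexp_le
  have havg_llr : (⨍ x in S, Real.log (h x) ∂μ) = - ⨍ x in S, llr μ ν x ∂μ := by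
    simp_rw [hlogh]; exact MeasureTheory.average_neg (μ := μ.restrict S) (llr μ ν)
  rw [havg_llr] at hlog_le
  have h2 : Real.log ((μ S).toReal / (ν S).toReal) ≤ ⨍ x in S, llr μ ν x ∂μ := by
    have : Real.log ((μ S).toReal⁻¹ * (ν S).toReal) =
        - Real.log ((μ S).toReal / (ν S).toReal) := by
      rw [Real.log_mul (by positivity) (by positivity), Real.log_inv,
        Real.log_div (by positivity) (by positivity)]
      ring
    rw [this] at hlog_le
    linarith
  calc (μ S).toReal * Real.log ((μ S).toReal / (ν S).toReal)
      ≤ (μ S).toReal * ⨍ x in S, llr μ ν x ∂μ :=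
        mul_le_mul_of_nonneg_left h2 ENNReal.toReal_nonneg
    _ = ∫ x in S, llr μ ν x ∂μ := by
        rw [setAverage_eq, smul_eq_mul, measureReal_def]
        field_simp


lemma entropy_ge {p : ℝ} (hp : 0 < p) (hp1 : p < 1) :
    -Real.log 2 ≤ p * Real.log p + (1 - p) * Real.log (1 - p) := by
  have hq : 0 < 1 - p := by linarith
  have h1 : 1 - (2*p)⁻¹ ≤ Real.log (2*p) := by
    have := Real.log_le_sub_one_of_pos (x := (2*p)⁻¹) (by positivity)
    rw [Real.log_inv] at this; linarith
  have h2 : 1 - (2*(1-p))⁻¹ ≤ Real.log (2*(1-p)) := by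
    have := Real.log_le_sub_one_of_pos (x := (2*(1-p))⁻¹) (by positivity)
    rw [Real.log_inv] at this; linarith
  have e1 : Real.log (2*p) = Real.log 2 + Real.log p := Real.log_mul (by norm_num) hp.ne'
  have e2 : Real.log (2*(1-p)) = Real.log 2 + Real.log (1-p) :=
    Real.log_mul (by norm_num) hq.ne'
  have k1 : p - 1/2 ≤ p * Real.log (2*p) := by
    have h := mul_le_mul_of_nonneg_left h1 hp.le
    have : p * (1 - (2*p)⁻¹) = p - 1/2 := by field_simp
    linarith
  have k2 : (1-p) - 1/2 ≤ (1-p) * Real.log (2*(1-p)) := by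
    have h := mul_le_mul_of_nonneg_left h2 hq.le
    have : (1-p) * (1 - (2*(1-p))⁻¹) = (1-p) - 1/2 := by field_simp
    linarith
  rw [e1] at k1; rw [e2] at k2
  nlinarith [k1, k2]


/-- Generalized Fano inequality. -/
theorem stmt_15 {Θ 𝒳 A : Type*} [MeasurableSpace Θ] [MeasurableSpace 𝒳]
    [MeasurableSpace A]
    (prior : Measure Θ) [IsProbabilityMeasure prior]
    (P : Kernel Θ 𝒳) [IsMarkovKernel P]
    (L : Θ → A → ℝ≥0∞) (hL : Measurable (Function.uncurry L))
    (T : 𝒳 → A) (hT : Measurable T)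
    (Δ : ℝ≥0∞) (hΔ : 0 < Δ)
    (pΔ : ℝ≥0∞) (hpΔ : pΔ = ⨆ a : A, prior {θ | L θ a ≤ Δ}) (hp1 : pΔ < 1) :
    Δ * (1 - (mutualInfo prior P + ENNReal.ofReal (Real.log 2)) /
          ENNReal.ofReal (Real.log (1 / pΔ.toReal)))
      ≤ ∫⁻ p : Θ × 𝒳, L p.1 (T p.2) ∂(prior.compProd P) := by
  set μ : Measure (Θ × 𝒳) := prior.compProd P with hμdef
  set ν : Measure (Θ × 𝒳) := prior.prod (μ.snd) with hνdef
  haveI : IsProbabilityMeasure μ := by rw [hμdef]; infer_instance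
  haveI : IsProbabilityMeasure (μ.snd) := by infer_instance
  haveI : IsProbabilityMeasure ν := by rw [hνdef]; infer_instance
  have hf : Measurable (fun p : Θ × 𝒳 => L p.1 (T p.2)) :=
    hL.comp (measurable_fst.prodMk (hT.comp measurable_snd))
  set E : Set (Θ × 𝒳) := {p | L p.1 (T p.2) ≤ Δ} with hEdef
  have hE : MeasurableSet E := measurableSet_le hf measurable_const
  have hνE : ν E ≤ pΔ := by
    rw [hνdef, Measure.prod_apply_symm hE]
    calc ∫⁻ y, prior ((fun x => (x, y)) ⁻¹' E) ∂μ.snd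
        ≤ ∫⁻ _, pΔ ∂μ.snd := by
          refine lintegral_mono fun y => ?_
          rw [hpΔ]
          exact le_iSup (fun a => prior {θ | L θ a ≤ Δ}) (T y)
      _ = pΔ := by simp
  set lg : ℝ := Real.log (1 / pΔ.toReal) with hlgdef
  set c : ℝ≥0∞ := ENNReal.ofReal lg with hcdef
  set num : ℝ≥0∞ := mutualInfo prior P + ENNReal.ofReal (Real.log 2) with hnumdef
  by_cases hr : 1 ≤ num / c
  · rw [tsub_eq_zero_of_le hr, mul_zero]; exact zero_le
  push_neg at hr
  have hlog2 : (0:ℝ) < Real.log 2 := Real.log_pos (by norm_num)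
  have hnum0 : num ≠ 0 :=
    (lt_of_lt_of_le (ENNReal.ofReal_pos.mpr hlog2) le_add_self).ne'
  have hc0 : c ≠ 0 := by
    intro h0
    rw [h0, ENNReal.div_zero hnum0] at hr
    exact absurd hr (by simp)
  have hctop : c ≠ ⊤ := ENNReal.ofReal_ne_top
  have hlg_pos : 0 < lg := by
    by_contra h
    push_neg at h
    exact hc0 (by rw [hcdef]; exact ENNReal.ofReal_eq_zero.mpr h)
  have hItop : mutualInfo prior P ≠ ⊤ := by
    intro h
    rw [hnumdef, h, top_add, ENNReal.top_div_of_ne_top hctop] at hr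
    exact absurd hr (by simp)
  have hmi : mutualInfo prior P = klDiv μ ν := rfl
  rw [hmi, klDiv] at hItop
  by_cases hcond : μ ≪ ν ∧ Integrable (llr μ ν) μ
  swap
  · rw [if_neg hcond] at hItop; exact absurd rfl hItop
  obtain ⟨hac, hint⟩ := hcond
  have hIval : mutualInfo prior P = ENNReal.ofReal (∫ x, llr μ ν x ∂μ) := by
    rw [hmi, klDiv, if_pos ⟨hac, hint⟩]
  set I0 : ℝ := ∫ x, llr μ ν x ∂μ with hI0def
  have hI0_nonneg : 0 ≤ I0 := by
    have h := jensen_llr μ ν hac hint MeasurableSet.univ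
    simpa [measure_univ] using h
  have hpΔtop : pΔ ≠ ⊤ := (hp1.trans_le le_top).ne
  have hpt1 : pΔ.toReal < 1 := by
    rw [← ENNReal.toReal_one]
    exact (ENNReal.toReal_lt_toReal hpΔtop ENNReal.one_ne_top).mpr hp1
  have hqE_le : (ν E).toReal ≤ pΔ.toReal := ENNReal.toReal_mono hpΔtop hνE
  have hpt0 : 0 < pΔ.toReal := by
    by_contra h
    push_neg at h
    have h0 : pΔ.toReal = 0 := le_antisymm h ENNReal.toReal_nonneg
    rw [hlgdef, h0] at hlg_pos
    simp at hlg_pos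
  set pE := (μ E).toReal with hpEdef
  set qE := (ν E).toReal with hqEdef
  have hpEc : (μ Eᶜ).toReal = 1 - pE := by
    rw [prob_compl_eq_one_sub hE,
      ENNReal.toReal_sub_of_le prob_le_one ENNReal.one_ne_top, ENNReal.toReal_one]
  have hqEc : (ν Eᶜ).toReal = 1 - qE := by
    rw [prob_compl_eq_one_sub hE,
      ENNReal.toReal_sub_of_le prob_le_one ENNReal.one_ne_top, ENNReal.toReal_one]
  have hkey : pE * lg ≤ I0 + Real.log 2 := by
    have j1 := jensen_llr μ ν hac hint hE
    have j2 := jensen_llr μ ν hac hint hE.compl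
    rw [← hpEdef, ← hqEdef] at j1
    rw [hpEc, hqEc] at j2
    have hsplit : ∫ x in E, llr μ ν x ∂μ + ∫ x in Eᶜ, llr μ ν x ∂μ = I0 :=
      integral_add_compl hE hint
    by_cases hpE0 : pE = 0
    · rw [hpE0, zero_mul]; linarith
    have hpE_pos : 0 < pE := lt_of_le_of_ne ENNReal.toReal_nonneg (Ne.symm hpE0)
    have hνE0 : ν E ≠ 0 := by
      intro h
      exact hpE0 (by rw [hpEdef, hac h, ENNReal.toReal_zero])
    have hqE_pos : 0 < qE := ENNReal.toReal_pos hνE0 (measure_ne_top _ _)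
    have hqc_pos : 0 < 1 - qE := by linarith
    have hlg_le : lg ≤ - Real.log qE := by
      rw [← Real.log_inv, ← one_div]
      exact Real.log_le_log (one_div_pos.mpr hpt0) (one_div_le_one_div_of_le hqE_pos hqE_le)
    by_cases hpc0 : 1 - pE = 0
    · have hpE1 : pE = 1 := by linarith
      have hμEc0 : μ Eᶜ = 0 := by
        rcases (ENNReal.toReal_eq_zero_iff _).mp (hpEc.trans (by rw [hpE1]; ring)) with h | h
        · exact h
        · exact absurd h (measure_ne_top _ _)
      have hInt2 : ∫ x in Eᶜ, llr μ ν x ∂μ = 0 := by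
        rw [Measure.restrict_eq_zero.mpr hμEc0, integral_zero_measure]
      rw [hpE1] at j1 ⊢
      have e1 : Real.log (1 / qE) = - Real.log qE := by rw [one_div, Real.log_inv]
      rw [e1] at j1
      linarith
    have hpE_le1 : pE ≤ 1 := by
      have := ENNReal.toReal_mono ENNReal.one_ne_top (prob_le_one (μ := μ) (s := E))
      simpa using this
    have hpc_pos : 0 < 1 - pE := lt_of_le_of_ne (by linarith) (Ne.symm hpc0)
    have hent := entropy_ge hpE_pos (by linarith)
    have e1 : Real.log (pE / qE) = Real.log pE - Real.log qE :=
      Real.log_div hpE0 hqE_pos.ne'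
    have e2 : Real.log ((1 - pE) / (1 - qE)) = Real.log (1 - pE) - Real.log (1 - qE) :=
      Real.log_div hpc0 hqc_pos.ne'
    have hlogqc : Real.log (1 - qE) ≤ 0 := Real.log_nonpos (by linarith) (by linarith)
    rw [e1, mul_sub] at j1
    rw [e2, mul_sub] at j2
    have m1 : pE * lg ≤ -(pE * Real.log qE) := by
      have := mul_le_mul_of_nonneg_left hlg_le hpE_pos.le
      linarith [this]
    have m2 : 0 ≤ -((1 - pE) * Real.log (1 - qE)) := by
      have := mul_nonpos_of_nonneg_of_nonpos hpc_pos.le hlogqc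
      linarith
    nlinarith [j1, j2, hsplit, hent, m1, m2, hlog2.le]
  -- wrap up in ℝ≥0∞
  have hμE_le : μ E ≤ num / c := by
    have h1 : μ E = ENNReal.ofReal pE := (ENNReal.ofReal_toReal (measure_ne_top _ _)).symm
    have h2 : num = ENNReal.ofReal (I0 + Real.log 2) := by
      rw [hnumdef, hIval, ← ENNReal.ofReal_add hI0_nonneg hlog2.le]
    rw [h1, h2, hcdef, ← ENNReal.ofReal_div_of_pos hlg_pos]
    exact ENNReal.ofReal_le_ofReal ((le_div_iff₀ hlg_pos).mpr hkey)
  calc Δ * (1 - num / c) ≤ Δ * (1 - μ E) :=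
        mul_le_mul_right (tsub_le_tsub_left hμE_le 1) Δ
    _ = Δ * μ Eᶜ := by rw [prob_compl_eq_one_sub hE]
    _ ≤ Δ * μ {p : Θ × 𝒳 | Δ ≤ L p.1 (T p.2)} := by
        refine mul_le_mul_right (measure_mono ?_) Δ
        intro p hp
        simp only [Set.mem_compl_iff, hEdef, Set.mem_setOf_eq] at hp
        exact le_of_lt (lt_of_not_ge hp)
    _ ≤ ∫⁻ p, L p.1 (T p.2) ∂μ := mul_meas_ge_le_lintegral₀ hf.aemeasurable Δ
end
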